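/- arXiv:1904.08178 — 2 statements merged into one kernel-verified Lean document; each statement's English description precedes it below -/
import Mathlib

section
/- Let G(V,E,w) be a finite undirected weighted graph with possibly negative weights such that deg^-(u) ≤ Δ for every vertex u. Then the greedy peeling algorithm, which repeatedly removes a vertex of minimum induced degree d(v) = deg^+(v) − deg^-(v) from the current graph and returns the intermediate subgraph of maximum density, outputs a vertex set whose density w(S)/|S| is at least ρ*/2 − Δ/2, where ρ* = max_{∅ ≠ T ⊆ V} w(T)/|T|. -/
/-!
Let `T` be a densest set. Every vertex of `T` has degree at least `ρ*` into `T`, since deleting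
it does not raise the density above `ρ*`. Just before peeling first removes a vertex `v` of `T`,
the current set `H` contains `T`, so `d_H(v) ≥ deg⁺_T(v) - Δ ≥ ρ* - Δ`, and by the choice of `v`
every vertex of `H` has induced degree at least `ρ* - Δ`. Summing, `2 w(H) ≥ (ρ* - Δ) |H|`.
-/

open Finset

variable {V : Type*} [Fintype V] [DecidableEq V]

/-- Induced (signed) degree of `v` within `S`. -/
noncomputable def dDeg (w : V → V → ℝ) (S : Finset V) (v : V) : ℝ :=
  (∑ x ∈ S, max (w v x) 0) - (∑ x ∈ S, max (-(w v x)) 0)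

/-- Induced weight of `S` (each edge counted once; `w` symmetric, zero diagonal). -/
noncomputable def indWeight (w : V → V → ℝ) (S : Finset V) : ℝ :=
  (∑ a ∈ S, ∑ b ∈ S, w a b) / 2

omit [Fintype V] [DecidableEq V] in
lemma dDeg_eq_sum (w : V → V → ℝ) (S : Finset V) (v : V) :
    dDeg w S v = ∑ x ∈ S, w v x := by
  rw [dDeg, ← sum_sub_distrib]
  exact sum_congr rfl fun x _ => max_zero_sub_eq_self _

omit [Fintype V] [DecidableEq V] in
lemma sum_dDeg_eq_two_mul_indWeight (w : V → V → ℝ) (S : Finset V) :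
    ∑ x ∈ S, dDeg w S x = 2 * indWeight w S := by
  simp only [dDeg_eq_sum, indWeight]
  ring

omit [Fintype V] [DecidableEq V] in
lemma div_two_le_indWeight_div_card (w : V → V → ℝ) {S : Finset V}
    (hS : S.Nonempty) {c : ℝ} (hc : ∀ x ∈ S, c ≤ dDeg w S x) :
    c / 2 ≤ indWeight w S / #S := by
  have hsum : #S • c ≤ ∑ x ∈ S, dDeg w S x := card_nsmul_le_sum S _ c hc
  rw [sum_dDeg_eq_two_mul_indWeight, nsmul_eq_mul] at hsum
  rw [le_div_iff₀ (by exact_mod_cast hS.card_pos)]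
  linarith

omit [Fintype V] in
lemma indWeight_erase (w : V → V → ℝ) (hsymm : ∀ u v, w u v = w v u)
    (hdiag : ∀ v, w v v = 0) {S : Finset V} {v : V} (hv : v ∈ S) :
    indWeight w (S.erase v) = indWeight w S - ∑ x ∈ S, w v x := by
  have hcol : ∑ a ∈ S, w a v = ∑ x ∈ S, w v x := sum_congr rfl fun a _ => hsymm a v
  simp only [indWeight, sum_erase_eq_sub hv, sum_sub_distrib, hcol, hdiag]
  ring

omit [Fintype V] [DecidableEq V] in
lemma indWeight_le_mul_card (w : V → V → ℝ) {ρ : ℝ}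
    (hρ : IsGreatest {ρ : ℝ | ∃ T : Finset V, T.Nonempty ∧
      ρ = indWeight w T / (T.card : ℝ)} ρ) (S : Finset V) :
    indWeight w S ≤ ρ * #S := by
  rcases S.eq_empty_or_nonempty with rfl | hS
  · simp [indWeight]
  · have hcard : (0 : ℝ) < #S := by exact_mod_cast hS.card_pos
    rw [← div_le_iff₀ hcard]
    exact hρ.2 ⟨S, hS, rfl⟩

omit [Fintype V] in
lemma le_sum_of_mem_densest (w : V → V → ℝ) (hsymm : ∀ u v, w u v = w v u)
    (hdiag : ∀ v, w v v = 0) {ρ : ℝ}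
    (hρ : IsGreatest {ρ : ℝ | ∃ T : Finset V, T.Nonempty ∧
      ρ = indWeight w T / (T.card : ℝ)} ρ)
    {T : Finset V} (hT : ρ = indWeight w T / #T) {v : V} (hv : v ∈ T) :
    ρ ≤ ∑ x ∈ T, w v x := by
  have hcard : (0 : ℝ) < #T := by exact_mod_cast card_pos.mpr ⟨v, hv⟩
  have hwT : indWeight w T = ρ * #T := by rw [hT]; field_simp
  have herase := indWeight_le_mul_card w hρ (T.erase v)
  rw [indWeight_erase w hsymm hdiag hv, card_erase_of_mem hv,
    Nat.cast_sub (card_pos.mpr ⟨v, hv⟩), hwT] at herase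
  push_cast at herase
  linarith

omit [DecidableEq V] in
lemma sum_sub_le_dDeg (w : V → V → ℝ) {Δ : ℝ} {v : V}
    (hΔ : ∑ x : V, max (-(w v x)) 0 ≤ Δ) {S T : Finset V} (hTS : T ⊆ S) :
    ∑ x ∈ T, w v x - Δ ≤ dDeg w S v := by
  have hpos : ∑ x ∈ T, w v x ≤ ∑ x ∈ S, max (w v x) 0 :=
    (sum_le_sum fun x _ => le_max_left _ _).trans
      (sum_le_sum_of_subset_of_nonneg hTS fun x _ _ => le_max_right _ _)
  have hneg : ∑ x ∈ S, max (-(w v x)) 0 ≤ Δ :=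
    (sum_le_sum_of_subset_of_nonneg (subset_univ S) fun x _ _ => le_max_right _ _).trans hΔ
  rw [dDeg]
  linarith

lemma card_eq_card_sub_of_erase_chain {H : ℕ → Finset V} (h0 : H 0 = univ)
    (hstep : ∀ i, i + 1 < Fintype.card V → ∃ v ∈ H i, H (i + 1) = (H i).erase v) :
    ∀ i < Fintype.card V, #(H i) = Fintype.card V - i := by
  intro i
  induction i with
  | zero => simp [h0]
  | succ i ih =>
    intro hi
    obtain ⟨v, hv, hH⟩ := hstep i hi
    rw [hH, card_erase_of_mem hv, ih (by omega)]
    omega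

/-- Take the last `i` with `T ⊆ H i`: either the vertex removed next lies in `T`, or `H i` is
the last, one-element set of the sequence and equals `T`. -/
lemma exists_minimizer_mem_of_peeling (w : V → V → ℝ) {H : ℕ → Finset V}
    (h0 : H 0 = univ)
    (hstep : ∀ i, i + 1 < Fintype.card V →
      ∃ v ∈ H i, (∀ x ∈ H i, dDeg w (H i) v ≤ dDeg w (H i) x) ∧
        H (i + 1) = (H i).erase v)
    {T : Finset V} (hT : T.Nonempty) :
    ∃ i < Fintype.card V, T ⊆ H i ∧
      ∃ v ∈ T, ∀ x ∈ H i, dDeg w (H i) v ≤ dDeg w (H i) x := by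
  set N := Fintype.card V
  have hN : 0 < N := hT.card_pos.trans_le (card_le_univ T)
  set i := Nat.findGreatest (fun i => T ⊆ H i) (N - 1)
  have hiN : i ≤ N - 1 := Nat.findGreatest_le _
  have hTi : T ⊆ H i := Nat.findGreatest_spec (P := fun i => T ⊆ H i) (Nat.zero_le _)
    (by simp [h0])
  refine ⟨i, by omega, hTi, ?_⟩
  rcases hiN.lt_or_eq with hlt | heq
  · obtain ⟨v, _, hmin, hH⟩ := hstep i (by omega)
    have hTnext : ¬ T ⊆ H (i + 1) := Nat.findGreatest_is_greatest (Nat.lt_succ_self i) (by omega)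
    refine ⟨v, ?_, hmin⟩
    by_contra hvT
    exact hTnext (hH ▸ fun x hx => mem_erase.mpr ⟨fun h => hvT (h ▸ hx), hTi hx⟩)
  · have hcard : #(H i) = 1 := by
      rw [card_eq_card_sub_of_erase_chain h0
        (fun j hj => (hstep j hj).imp fun _ ⟨hv, _, hH⟩ => ⟨hv, hH⟩) i (by omega)]
      omega
    obtain ⟨u, hu⟩ := card_eq_one.mp hcard
    obtain ⟨v, hv⟩ := hT
    have hvu : v = u := mem_singleton.mp (hu ▸ hTi hv)
    refine ⟨v, hv, fun x hx => ?_⟩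
    rw [hvu, mem_singleton.mp (hu ▸ hx : x ∈ ({u} : Finset V))]

theorem peeling_guarantee_general
    (w : V → V → ℝ) (hsymm : ∀ u v, w u v = w v u) (hdiag : ∀ v, w v v = 0)
    (Δ : ℝ) (hΔ : ∀ u : V, ∑ x : V, max (-(w u x)) 0 ≤ Δ)
    (H : ℕ → Finset V) (h0 : H 0 = Finset.univ)
    (hstep : ∀ i, i + 1 < Fintype.card V →
      ∃ v ∈ H i, (∀ x ∈ H i, dDeg w (H i) v ≤ dDeg w (H i) x) ∧
        H (i + 1) = (H i).erase v)
    (ρstar : ℝ)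
    (hρ : IsGreatest {ρ : ℝ | ∃ T : Finset V, T.Nonempty ∧
      ρ = indWeight w T / (T.card : ℝ)} ρstar) :
    ∃ i < Fintype.card V, (H i).Nonempty ∧
      ρstar / 2 - Δ / 2 ≤ indWeight w (H i) / ((H i).card : ℝ) := by
  obtain ⟨T, hT, hTρ⟩ := hρ.1
  obtain ⟨i, hi, hTi, v, hvT, hmin⟩ := exists_minimizer_mem_of_peeling w h0 hstep hT
  have hdeg : ∀ x ∈ H i, ρstar - Δ ≤ dDeg w (H i) x := fun x hx =>
    calc ρstar - Δ ≤ ∑ y ∈ T, w v y - Δ := by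
          linarith [le_sum_of_mem_densest w hsymm hdiag hρ hTρ hvT]
      _ ≤ dDeg w (H i) v := sum_sub_le_dDeg w (hΔ v) hTi
      _ ≤ dDeg w (H i) x := hmin x hx
  refine ⟨i, hi, hT.mono hTi, ?_⟩
  rw [← sub_div]
  exact div_two_le_indWeight_div_card w (hT.mono hTi) hdeg

/-- **Guarantee of the greedy peeling algorithm (Theorem 2).**
If every vertex `u` has negative degree `deg⁻(u) ≤ Δ`, then any run of the
peeling algorithm (the nested sequence `H 0 = V`, `H (i+1) = H i` minus a
vertex of minimum induced degree) contains an intermediate set whose density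
is at least `ρ*/2 - Δ/2`, where `ρ*` is the maximum density over nonempty
vertex sets.  Hence the output (the densest `H i`) has density at least
`ρ*/2 - Δ/2`. -/
theorem peeling_guarantee
    [Nonempty V]
    (w : V → V → ℝ) (hsymm : ∀ u v, w u v = w v u) (hdiag : ∀ v, w v v = 0)
    (Δ : ℝ) (hΔ : ∀ u : V, ∑ x : V, max (-(w u x)) 0 ≤ Δ)
    (H : ℕ → Finset V) (h0 : H 0 = Finset.univ)
    (hstep : ∀ i, i + 1 < Fintype.card V →
      ∃ v ∈ H i, (∀ x ∈ H i, dDeg w (H i) v ≤ dDeg w (H i) x) ∧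
        H (i + 1) = (H i).erase v)
    (ρstar : ℝ)
    (hρ : IsGreatest {ρ : ℝ | ∃ T : Finset V, T.Nonempty ∧
      ρ = indWeight w T / (T.card : ℝ)} ρstar) :
    ∃ i < Fintype.card V, (H i).Nonempty ∧
      ρstar / 2 - Δ / 2 ≤ indWeight w (H i) / ((H i).card : ℝ) :=
  peeling_guarantee_general w hsymm hdiag Δ hΔ H h0 hstep ρstar hρ
end

section
/- (Max-Cut to Positive-Cut gadget.) Let G(V,E,w) be a weighted graph on n ≥ 3 vertices, c ∈ ℝ, and u, v two distinct vertices. Form G' by adding, for every vertex x ∉ {u,v}, edges {u,x} and {v,x} of weight −d (added to any existing weight), and adding weight (n−2)d − c to the edge {u,v}. Suppose d > W + |c|, where W = Σ_{e∈E} |w(e)|. Then: (1) every partition (A,B) of V with u,v on the same side has cut_{G'}(A,B) ≤ cut_G(A,B) − d·(number of crossing gadget edges) < 0 whenever A,B are nonempty; and (2) for every partition (A,B) with u ∈ A, v ∈ B, cut_{G'}(A,B) = cut_G(A,B) − c. In particular G' has a partition with positive cut and u,v separated if and only if G has a cut of value greater than c separating u and v. -/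
/-!
On a cut separating `u` and `v` the gadget edges contribute `-c`: the `-d` edges from the side
of `u` to `v` and from `u` to the side of `v` number `n - 2` together and are paid back by the
`(n - 2) d` put on `{u, v}`. On a nontrivial cut with `u, v` on the same side, every vertex on the
other side carries two crossing `-d` edges, and `d` exceeds every cut of `G`.
-/

open Finset

section

variable {V : Type*} [Fintype V] [DecidableEq V]

def cut (w : V → V → ℝ) (A : Finset V) : ℝ := ∑ a ∈ A, ∑ b ∈ Aᶜ, w a b

lemma cut_sub (w w' : V → V → ℝ) (A : Finset V) :
    cut (w' - w) A = cut w' A - cut w A := by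
  simp only [cut, Pi.sub_apply, sum_sub_distrib]

lemma cut_compl {w : V → V → ℝ} (hsymm : ∀ x y, w x y = w y x) (A : Finset V) :
    cut w Aᶜ = cut w A := by
  rw [cut, cut, compl_compl, sum_comm]
  exact sum_congr rfl fun _ _ => sum_congr rfl fun _ _ => hsymm _ _

lemma cut_le_half_sum_abs {w : V → V → ℝ} (hsymm : ∀ x y, w x y = w y x) (A : Finset V) :
    cut w A ≤ (∑ x, ∑ y, |w x y|) / 2 := by
  have hcut : cut w A ≤ cut (fun x y => |w x y|) A :=
    sum_le_sum fun _ _ => sum_le_sum fun _ _ => le_abs_self _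
  have hsplit : cut (fun x y => |w x y|) A + cut (fun x y => |w x y|) Aᶜ ≤
      ∑ x, ∑ y, |w x y| := by
    rw [cut, cut, ← sum_add_sum_compl A fun x => ∑ y, |w x y|]
    exact add_le_add (sum_le_sum fun _ _ => sum_le_univ_sum_of_nonneg fun _ => abs_nonneg _)
      (sum_le_sum fun _ _ => sum_le_univ_sum_of_nonneg fun _ => abs_nonneg _)
  rw [cut_compl (fun x y => by rw [hsymm])] at hsplit
  linarith

structure IsPositiveCutGadget (w w' : V → V → ℝ) (u v : V) (c d : ℝ) : Prop where
  symm : ∀ x y, w' x y = w' y x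
  weight_edge : w' u v = w u v + ((Fintype.card V : ℝ) - 2) * d - c
  weight_left : ∀ x, x ≠ u → x ≠ v → w' u x = w u x - d
  weight_right : ∀ x, x ≠ u → x ≠ v → w' v x = w v x - d
  weight_of_ne : ∀ x y, x ≠ u → x ≠ v → y ≠ u → y ≠ v → w' x y = w x y

namespace IsPositiveCutGadget

variable {w w' : V → V → ℝ} {u v : V} {c d : ℝ} {A : Finset V}

lemma cut_of_mem_of_mem (hG : IsPositiveCutGadget w w' u v c d) (huv : u ≠ v)
    (hu : u ∈ A) (hv : v ∈ A) :
    cut w' A = cut w A - d * (2 * (#Aᶜ : ℝ)) := by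
  have hout : ∀ b ∈ Aᶜ, b ≠ u ∧ b ≠ v := fun b hb =>
    ⟨(ne_of_mem_of_not_mem hu (mem_compl.1 hb)).symm,
      (ne_of_mem_of_not_mem hv (mem_compl.1 hb)).symm⟩
  have hδ : cut (w' - w) A = -(d * (2 * (#Aᶜ : ℝ))) := by
    rw [cut, sum_eq_add_of_mem u v hu hv huv fun a _ ha => sum_eq_zero fun b hb => by
      simp [hG.weight_of_ne a b ha.1 ha.2 (hout b hb).1 (hout b hb).2]]
    rw [sum_eq_card_nsmul fun b hb => show (w' - w) u b = -d by
        simp [hG.weight_left b (hout b hb).1 (hout b hb).2],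
      sum_eq_card_nsmul fun b hb => show (w' - w) v b = -d by
        simp [hG.weight_right b (hout b hb).1 (hout b hb).2]]
    simp only [nsmul_eq_mul]
    ring
  linarith [cut_sub w w' A]

lemma cut_of_mem_of_notMem (hG : IsPositiveCutGadget w w' u v c d)
    (hsymm : ∀ x y, w x y = w y x) (hu : u ∈ A) (hv : v ∉ A) :
    cut w' A = cut w A - c := by
  have hvc : v ∈ Aᶜ := mem_compl.2 hv
  have hfrom_u :
      ∑ b ∈ Aᶜ, (w' - w) u b = -d * (#Aᶜ - 1) + ((Fintype.card V : ℝ) - 2) * d - c := by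
    rw [← add_sum_erase _ _ hvc, sum_eq_card_nsmul fun b hb => show (w' - w) u b = -d by
      obtain ⟨hbv, hb⟩ := mem_erase.1 hb
      simp [hG.weight_left b (ne_of_mem_of_not_mem hu (mem_compl.1 hb)).symm hbv],
      nsmul_eq_mul, cast_card_erase_of_mem hvc, Pi.sub_apply, Pi.sub_apply, hG.weight_edge]
    ring
  have hto_v : ∀ a ∈ A.erase u, ∑ b ∈ Aᶜ, (w' - w) a b = -d := fun a ha => by
    obtain ⟨hau, ha⟩ := mem_erase.1 ha
    have hav : a ≠ v := ne_of_mem_of_not_mem ha hv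
    rw [sum_eq_single_of_mem v hvc fun b hb hbv => by
      simp [hG.weight_of_ne a b hau hav (ne_of_mem_of_not_mem hu (mem_compl.1 hb)).symm hbv]]
    simp [hG.symm a v, hG.weight_right a hau hav, hsymm a v]
  have hcard : (#A : ℝ) + #Aᶜ = Fintype.card V := by exact_mod_cast card_add_card_compl A
  have hδ : cut (w' - w) A = -c := by
    rw [cut, ← add_sum_erase _ _ hu, hfrom_u, sum_eq_card_nsmul hto_v, nsmul_eq_mul,
      cast_card_erase_of_mem hu, ← hcard]
    ring
  linarith [cut_sub w w' A]

lemma cut_of_notMem_of_notMem (hG : IsPositiveCutGadget w w' u v c d)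
    (hsymm : ∀ x y, w x y = w y x) (huv : u ≠ v) (hu : u ∉ A) (hv : v ∉ A) :
    cut w' A = cut w A - d * (2 * (#A : ℝ)) := by
  rw [← cut_compl hG.symm, ← cut_compl hsymm,
    hG.cut_of_mem_of_mem huv (mem_compl.2 hu) (mem_compl.2 hv), compl_compl]

end IsPositiveCutGadget

end

theorem maxcut_to_positive_cut_gadget_general
    {V : Type*} [Fintype V] [DecidableEq V]
    (w : V → V → ℝ) (hsymm : ∀ x y, w x y = w y x)
    (u v : V) (huv : u ≠ v) (c d : ℝ)
    (hd : (∑ x : V, ∑ y : V, |w x y|) / 2 + |c| < d)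
    (w' : V → V → ℝ) (hw'symm : ∀ x y, w' x y = w' y x)
    (h1 : w' u v = w u v + ((Fintype.card V : ℝ) - 2) * d - c)
    (h2 : ∀ x, x ≠ u → x ≠ v → w' u x = w u x - d)
    (h3 : ∀ x, x ≠ u → x ≠ v → w' v x = w v x - d)
    (h4 : ∀ x y, x ≠ u → x ≠ v → y ≠ u → y ≠ v → w' x y = w x y) :
    (∀ A : Finset V, u ∈ A → v ∈ A → Aᶜ.Nonempty →
      (∑ a ∈ A, ∑ b ∈ Aᶜ, w' a b ≤
        (∑ a ∈ A, ∑ b ∈ Aᶜ, w a b) - d * (2 * ((Aᶜ).card : ℝ)) ∧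
       ∑ a ∈ A, ∑ b ∈ Aᶜ, w' a b < 0))
    ∧
    (∀ A : Finset V, u ∉ A → v ∉ A → A.Nonempty →
      (∑ a ∈ A, ∑ b ∈ Aᶜ, w' a b ≤
        (∑ a ∈ A, ∑ b ∈ Aᶜ, w a b) - d * (2 * (A.card : ℝ)) ∧
       ∑ a ∈ A, ∑ b ∈ Aᶜ, w' a b < 0))
    ∧
    (∀ A : Finset V, u ∈ A → v ∉ A →
      ∑ a ∈ A, ∑ b ∈ Aᶜ, w' a b = (∑ a ∈ A, ∑ b ∈ Aᶜ, w a b) - c)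
    ∧
    ((∃ A : Finset V, u ∈ A ∧ v ∉ A ∧ 0 < ∑ a ∈ A, ∑ b ∈ Aᶜ, w' a b) ↔
     (∃ A : Finset V, u ∈ A ∧ v ∉ A ∧ c < ∑ a ∈ A, ∑ b ∈ Aᶜ, w a b)) := by
  have hG : IsPositiveCutGadget w w' u v c d := ⟨hw'symm, h1, h2, h3, h4⟩
  have hcut_lt (A : Finset V) : cut w A < d :=
    (cut_le_half_sum_abs hsymm A).trans_lt (by linarith [abs_nonneg c])
  have hd_pos : 0 < d := lt_of_le_of_lt (by positivity) hd
  have same_side (A : Finset V) (k : ℕ) (hk : 0 < k)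
      (h : cut w' A = cut w A - d * (2 * (k : ℝ))) :
      cut w' A ≤ cut w A - d * (2 * (k : ℝ)) ∧ cut w' A < 0 := by
    have hk_one : (1 : ℝ) ≤ k := by exact_mod_cast hk
    exact ⟨h.le, by nlinarith [hcut_lt A]⟩
  have hsep (A : Finset V) (hu : u ∈ A) (hv : v ∉ A) : cut w' A = cut w A - c :=
    hG.cut_of_mem_of_notMem hsymm hu hv
  refine ⟨fun A hu hv hne => ?_, fun A hu hv hne => ?_, hsep,
    exists_congr fun A => and_congr_right fun hu => and_congr_right fun hv => ?_⟩
  · exact same_side A _ hne.card_pos (hG.cut_of_mem_of_mem huv hu hv)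
  · exact same_side A _ hne.card_pos (hG.cut_of_notMem_of_notMem hsymm huv hu hv)
  · change 0 < cut w' A ↔ c < cut w A
    rw [hsep A hu hv, sub_pos]

/-- **Max-Cut to Positive-Cut gadget.**
Graph model: `w : V → V → ℝ` symmetric with zero diagonal on `n = |V| ≥ 3`
vertices (non-edges carry weight `0`), `u ≠ v` two distinct vertices, `c : ℝ`.
`w'` is the gadget graph: `w' u v = w u v + (n-2)d - c`; `w' u x = w u x - d`
and `w' v x = w v x - d` for `x ∉ {u,v}`; all other weights unchanged.
`d > W + |c|` where `W = (∑∑ |w|)/2` is the total absolute weight.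
For a set `A`, `cut_H(A, Aᶜ) = ∑_{a∈A}∑_{b∉A} w_H a b`.  Then:
(1) if `u, v` are on the same side of a partition into nonempty parts, the
gadget cut is at most `cut_G - d·(number of crossing gadget edges)` and is
negative; (2) if `u ∈ A`, `v ∉ A`, then `cut_{G'}(A,Aᶜ) = cut_G(A,Aᶜ) - c`.
In particular `G'` has a positive cut separating `u, v` iff `G` has a cut of
value `> c` separating `u, v`. -/
theorem maxcut_to_positive_cut_gadget
    {V : Type*} [Fintype V] [DecidableEq V]
    (w : V → V → ℝ) (hsymm : ∀ x y, w x y = w y x) (hdiag : ∀ x, w x x = 0)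
    (hn : 3 ≤ Fintype.card V)
    (u v : V) (huv : u ≠ v) (c d : ℝ)
    (hd : (∑ x : V, ∑ y : V, |w x y|) / 2 + |c| < d)
    (w' : V → V → ℝ) (hw'symm : ∀ x y, w' x y = w' y x)
    (h1 : w' u v = w u v + ((Fintype.card V : ℝ) - 2) * d - c)
    (h2 : ∀ x, x ≠ u → x ≠ v → w' u x = w u x - d)
    (h3 : ∀ x, x ≠ u → x ≠ v → w' v x = w v x - d)
    (h4 : ∀ x y, x ≠ u → x ≠ v → y ≠ u → y ≠ v → w' x y = w x y) :
    (∀ A : Finset V, u ∈ A → v ∈ A → Aᶜ.Nonempty →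
      (∑ a ∈ A, ∑ b ∈ Aᶜ, w' a b ≤
        (∑ a ∈ A, ∑ b ∈ Aᶜ, w a b) - d * (2 * ((Aᶜ).card : ℝ)) ∧
       ∑ a ∈ A, ∑ b ∈ Aᶜ, w' a b < 0))
    ∧
    (∀ A : Finset V, u ∉ A → v ∉ A → A.Nonempty →
      (∑ a ∈ A, ∑ b ∈ Aᶜ, w' a b ≤
        (∑ a ∈ A, ∑ b ∈ Aᶜ, w a b) - d * (2 * (A.card : ℝ)) ∧
       ∑ a ∈ A, ∑ b ∈ Aᶜ, w' a b < 0))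
    ∧
    (∀ A : Finset V, u ∈ A → v ∉ A →
      ∑ a ∈ A, ∑ b ∈ Aᶜ, w' a b = (∑ a ∈ A, ∑ b ∈ Aᶜ, w a b) - c)
    ∧
    ((∃ A : Finset V, u ∈ A ∧ v ∉ A ∧ 0 < ∑ a ∈ A, ∑ b ∈ Aᶜ, w' a b) ↔
     (∃ A : Finset V, u ∈ A ∧ v ∉ A ∧ c < ∑ a ∈ A, ∑ b ∈ Aᶜ, w a b)) :=
  maxcut_to_positive_cut_gadget_general w hsymm u v huv c d hd w' hw'symm h1 h2 h3 h4
end
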